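/- Assume that 1 − T : M → M is invertible. Then the fundamental group π₁(A(M,T), 0) of the Alexander quandle based at 0 ∈ M is isomorphic to the abelian group S(M,T). -/

import Mathlib

/-!
Common setup: the adjoint group of the Alexander quandle `A(M,T)` (F.J.-B.J. Clauwens,
"The adjoint group of an Alexander quandle").

For an abelian group `M` with automorphism `T`, the Alexander quandle `A(M,T)` is `M` with
`y * x = T y + x - T x`, and the adjoint group `Adj(A(M,T))` is presented with generators
`e x` for `x : M` and relations `e (y * x) = (e x)⁻¹ * e y * e x`.
-/

open scoped TensorProduct

namespace Clauwens

variable {M : Type*} [AddCommGroup M]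

/-- The relations of the adjoint group of the Alexander quandle `A(M,T)`:
for each `x y : M`, the relation `e_{y*x} = e_x⁻¹ * e_y * e_x`, where `y*x = T y + x - T x`. -/
def rels (T : M ≃+ M) : Set (FreeGroup M) :=
  {r | ∃ x y : M, r = FreeGroup.of (T y + x - T x) *
      ((FreeGroup.of x)⁻¹ * FreeGroup.of y * FreeGroup.of x)⁻¹}

/-- The adjoint group `Adj(A(M,T))` of the Alexander quandle. -/
abbrev Adj (T : M ≃+ M) : Type _ := PresentedGroup (rels T)

/-- The generator `e_x` of the adjoint group. -/
def e (T : M ≃+ M) (x : M) : Adj T := PresentedGroup.of x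

/-- The quandle automorphism `p ↦ p * x = T p + x - T x` of `A(M,T)`. -/
def σ (T : M ≃+ M) (x : M) : Equiv.Perm M where
  toFun p := T p + (x - T x)
  invFun p := T.symm (p - (x - T x))
  left_inv p := by simp
  right_inv p := by simp

lemma σ_apply (T : M ≃+ M) (x p : M) : σ T x p = T p + (x - T x) := rfl

lemma σ_inv_apply (T : M ≃+ M) (x p : M) : (σ T x)⁻¹ p = T.symm (p - (x - T x)) := rfl

lemma σ_rel (T : M ≃+ M) (x y : M) :
    σ T x * σ T y * (σ T x)⁻¹ = σ T (T y + x - T x) := by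
  ext p
  simp only [Equiv.Perm.mul_apply, σ_apply, σ_inv_apply, map_add, map_sub,
    AddEquiv.apply_symm_apply]
  abel

/-- The homomorphism `ρ` from the adjoint group to the group of quandle automorphisms of
`A(M,T)` acting on the right of `M` (hence the `ᵐᵒᵖ`), induced by the right action
`p · e_x = p * x = T p + x - T x`; the automorphism by which `g` acts is `(ρ T g).unop`. -/
def ρ (T : M ≃+ M) : Adj T →* (Equiv.Perm M)ᵐᵒᵖ :=
  PresentedGroup.toGroup (f := fun x => MulOpposite.op (σ T x)) (by
    rintro r ⟨x, y, rfl⟩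
    simp only [map_mul, map_inv, FreeGroup.lift_apply_of, ← MulOpposite.op_inv, ← MulOpposite.op_mul,
      mul_inv_rev, inv_inv]
    rw [MulOpposite.op_eq_one_iff, ← σ_rel T x y]
    group)

/-- `γ(x,y) = e_0⁻¹ e_{x+y} e_y⁻¹ e_0 e_x⁻¹ e_0`, so that
`e_0⁻¹ e_{x+y} = γ(x,y) e_0⁻¹ e_x e_0⁻¹ e_y`. -/
def γ (T : M ≃+ M) (x y : M) : Adj T :=
  (e T 0)⁻¹ * e T (x + y) * (e T y)⁻¹ * e T 0 * (e T x)⁻¹ * e T 0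

/-- `λ(x,y) = γ(y,x)⁻¹ γ(x,y)`. -/
def lam (T : M ≃+ M) (x y : M) : Adj T := (γ T y x)⁻¹ * γ T x y

/-- The additive endomorphism `τ` of `M ⊗_ℤ M` with `τ(x ⊗ y) = T y ⊗ x`. -/
noncomputable def τmap (T : M ≃+ M) : M ⊗[ℤ] M →ₗ[ℤ] M ⊗[ℤ] M :=
  (TensorProduct.comm ℤ M M).toLinearMap ∘ₗ
    (LinearMap.lTensor M T.toAddMonoidHom.toIntLinearMap)

lemma τmap_tmul (T : M ≃+ M) (x y : M) : τmap T (x ⊗ₜ[ℤ] y) = T y ⊗ₜ[ℤ] x := rfl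

/-- `S(M,T) = coker(1 - τ) = (M ⊗_ℤ M)/im(1 - τ)`. -/
abbrev S (T : M ≃+ M) : Type _ :=
  (M ⊗[ℤ] M) ⧸ LinearMap.range (LinearMap.id - τmap T)

/-- The class `[x ⊗ y]` in `S(M,T)`. -/
noncomputable def cls (T : M ≃+ M) (x y : M) : S T := Submodule.Quotient.mk (x ⊗ₜ[ℤ] y)

lemma mk_τmap (T : M ≃+ M) (w : M ⊗[ℤ] M) :
    (Submodule.Quotient.mk (τmap T w) : S T) = Submodule.Quotient.mk w := by
  rw [Submodule.Quotient.eq]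
  exact ⟨-w, by simp [LinearMap.sub_apply]; abel⟩

lemma cls_T (T : M ≃+ M) (x y : M) : cls T (T x) (T y) = cls T x y := by
  have h1 : cls T (T x) (T y) = Submodule.Quotient.mk (τmap T (T y ⊗ₜ[ℤ] x)) := rfl
  have h2 : (Submodule.Quotient.mk (T y ⊗ₜ[ℤ] x) : S T)
      = Submodule.Quotient.mk (τmap T (x ⊗ₜ[ℤ] y)) := rfl
  rw [h1, mk_τmap, h2, mk_τmap]; rfl

lemma cls_add_left (T : M ≃+ M) (x x' y : M) :
    cls T (x + x') y = cls T x y + cls T x' y := by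
  simp only [cls, ← Submodule.Quotient.mk_add, TensorProduct.add_tmul]

lemma cls_add_right (T : M ≃+ M) (x y y' : M) :
    cls T x (y + y') = cls T x y + cls T x y' := by
  simp only [cls, ← Submodule.Quotient.mk_add, TensorProduct.tmul_add]

lemma cls_neg_left (T : M ≃+ M) (x y : M) : cls T (-x) y = -cls T x y := by
  simp only [cls, ← Submodule.Quotient.mk_neg, TensorProduct.neg_tmul]

lemma cls_zero_left (T : M ≃+ M) (y : M) : cls T 0 y = 0 := by
  simp [cls, TensorProduct.zero_tmul]

lemma cls_zero_right (T : M ≃+ M) (x : M) : cls T x 0 = 0 := by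
  simp [cls, TensorProduct.tmul_zero]

/-- `T^m` for `m : ℤ`. -/
def Tz (T : M ≃+ M) (m : ℤ) : M ≃+ M := (m • T : AddAut M)

lemma Tz_zero (T : M ≃+ M) (x : M) : Tz T 0 x = x := rfl

lemma Tz_one (T : M ≃+ M) (x : M) : Tz T 1 x = T x := by simp [Tz]

lemma Tz_add (T : M ≃+ M) (m n : ℤ) (x : M) : Tz T (m + n) x = Tz T m (Tz T n x) := by
  simp [Tz, add_zsmul, AddAut.add_apply]

lemma cls_Tz_shift (T : M ≃+ M) (m : ℤ) (x y : M) :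
    cls T (Tz T (m + 1) x) (Tz T (m + 1) y) = cls T (Tz T m x) (Tz T m y) := by
  have h : ∀ z : M, Tz T (m + 1) z = T (Tz T m z) := by
    intro z; rw [add_comm, Tz_add, Tz_one]
  rw [h, h, cls_T]

lemma cls_Tz (T : M ≃+ M) (m : ℤ) (x y : M) :
    cls T (Tz T m x) (Tz T m y) = cls T x y := by
  induction m using Int.induction_on with
  | zero => rfl
  | succ i ih => rw [cls_Tz_shift, ih]
  | pred i ih =>
      have h := cls_Tz_shift T (-(i : ℤ) - 1) x y
      rw [sub_add_cancel] at h
      rw [← h, ih]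

/-- `F(M,T)` is the set `ℤ × M × S(M,T)` equipped with the multiplication
`(k, x, α)(m, y, β) = (k + m, T^m x + y, α + β + [T^m x ⊗ y])`. -/
abbrev F (T : M ≃+ M) : Type _ := ℤ × M × S T

noncomputable instance (T : M ≃+ M) : Group (F T) where
  mul g h := (g.1 + h.1, Tz T h.1 g.2.1 + h.2.1, g.2.2 + h.2.2 + cls T (Tz T h.1 g.2.1) h.2.1)
  one := ((0 : ℤ), (0 : M), (0 : S T))
  inv g := (-g.1, -(Tz T (-g.1) g.2.1), -g.2.2 + cls T g.2.1 g.2.1)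
  mul_assoc g h k := by
    obtain ⟨a, x, α⟩ := g; obtain ⟨b, y, β⟩ := h; obtain ⟨c, z, δ⟩ := k
    refine Prod.ext (add_assoc a b c) (Prod.ext ?_ ?_)
    · show Tz T c (Tz T b x + y) + z = Tz T (b + c) x + (Tz T c y + z)
      rw [add_comm b c, Tz_add, map_add]
      abel
    · show α + β + cls T (Tz T b x) y + δ + cls T (Tz T c (Tz T b x + y)) z
        = α + (β + δ + cls T (Tz T c y) z) + cls T (Tz T (b + c) x) (Tz T c y + z)
      rw [add_comm b c, Tz_add, map_add, cls_add_left, cls_add_right]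
      have h1 : cls T (Tz T c (Tz T b x)) (Tz T c y) = cls T (Tz T b x) y := cls_Tz T c _ _
      rw [h1]
      abel
  one_mul g := by
    obtain ⟨a, x, α⟩ := g
    refine Prod.ext (zero_add a) (Prod.ext ?_ ?_)
    · show Tz T a 0 + x = x
      rw [map_zero, zero_add]
    · show 0 + α + cls T (Tz T a 0) x = α
      rw [map_zero, cls_zero_left, zero_add, add_zero]
  mul_one g := by
    obtain ⟨a, x, α⟩ := g
    refine Prod.ext (add_zero a) (Prod.ext ?_ ?_)
    · show Tz T 0 x + 0 = x
      rw [Tz_zero, add_zero]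
    · show α + 0 + cls T (Tz T 0 x) 0 = α
      rw [cls_zero_right, add_zero, add_zero]
  inv_mul_cancel g := by
    obtain ⟨a, x, α⟩ := g
    have hx : Tz T a (Tz T (-a) x) = x := by
      rw [← Tz_add, add_neg_cancel, Tz_zero]
    refine Prod.ext (neg_add_cancel a) (Prod.ext ?_ ?_)
    · show Tz T a (-(Tz T (-a) x)) + x = 0
      rw [map_neg, hx, neg_add_cancel]
    · show -α + cls T x x + α + cls T (Tz T a (-(Tz T (-a) x))) x = 0
      rw [map_neg, hx, cls_neg_left]
      abel

/-- The canonical augmentation `ε : Adj(A(M,T)) → ℤ`, with `ε(e_x) = 1` for all `x`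
(written multiplicatively since `Adj` is a multiplicative group). -/
def ε (T : M ≃+ M) : Adj T →* Multiplicative ℤ :=
  PresentedGroup.toGroup (f := fun _ => Multiplicative.ofAdd (1 : ℤ)) (by
    rintro r ⟨x, y, rfl⟩
    simp only [map_mul, map_inv, FreeGroup.lift_apply_of]
    group)

/-- The subgroup `F(M,T)⁰` of elements `(0, x, α)` of `F(M,T)`. -/
noncomputable def Fo (T : M ≃+ M) : Subgroup (F T) where
  carrier := {g | g.1 = 0}
  mul_mem' := by
    rintro ⟨a, x, α⟩ ⟨b, y, β⟩ (ha : a = 0) (hb : b = 0)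
    show a + b = 0
    rw [ha, hb, add_zero]
  one_mem' := rfl
  inv_mem' := by
    rintro ⟨a, x, α⟩ (ha : a = 0)
    show -a = 0
    rw [ha, neg_zero]

/-- The fundamental group `π₁(A(M,T), 0)` of the Alexander quandle based at `0 ∈ M`:
the elements of `ker ε` fixing the base point `0`. -/
def pi1 (T : M ≃+ M) : Subgroup (Adj T) where
  carrier := {g | g ∈ (ε T).ker ∧ (ρ T g).unop 0 = 0}
  one_mem' := ⟨(ε T).ker.one_mem, by simp⟩
  mul_mem' := by
    intro a b ha hb
    refine ⟨(ε T).ker.mul_mem ha.1 hb.1, ?_⟩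
    show ((ρ T) (a * b)).unop 0 = 0
    rw [map_mul, MulOpposite.unop_mul, Equiv.Perm.mul_apply, ha.2, hb.2]
  inv_mem' := by
    intro a ha
    refine ⟨(ε T).ker.inv_mem ha.1, ?_⟩
    show ((ρ T) a⁻¹).unop 0 = 0
    rw [map_inv, MulOpposite.unop_inv]
    exact Equiv.Perm.inv_eq_iff_eq.mpr ha.2.symm

/-
Write `a = e 0` and `g x = a⁻¹ e x`. The elements `γ x y = g (x + y) (g x g y)⁻¹` are central,
and `γ (x - T x) y = ⁅g y, g x⁆`; as commutators of elements with central commutators they are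
biadditive, and the relation `g p g q = g (T q) g (p + q - T q)` makes them `τ`-invariant once
`1 - T` is invertible. They therefore define `θ : S(M,T) → Z(Adj)`. On the other side,
`e x ↦ (1, x - T x, 0)` defines `Φ : Adj → F(M,T)`, and the normal form
`(k, x, α) ↦ a^k g((1 - T)⁻¹ x) θ α` is a left inverse of `Φ`, so `Φ` is injective. Both the degree
`ε` and the action on `M` factor through `Φ`, so `π₁(A(M,T), 0) = Φ⁻¹ {(0, 0, α)}`, and `θ` maps
`S(M,T)` isomorphically onto it.
-/

open scoped commutatorElement IsMulCommutative

section Commutator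

variable {G : Type*} [Group G]

theorem commutatorElement_mul_left_of_mem_center {a b c : G} (h : ⁅b, c⁆ ∈ Subgroup.center G) :
    ⁅a * b, c⁆ = ⁅b, c⁆ * ⁅a, c⁆ := by
  rw [commutatorElement_mul_left_eq_conj_mul, Subgroup.mem_center_iff.mp h a,
    mul_inv_cancel_right]

theorem commutatorElement_mem_center_mul_left {z a c : G} (hz : z ∈ Subgroup.center G)
    (h : ⁅a, c⁆ ∈ Subgroup.center G) : ⁅z * a, c⁆ = ⁅a, c⁆ := by
  rw [commutatorElement_mul_left_of_mem_center h,
    commutatorElement_eq_one_iff_mul_comm.mpr (Subgroup.mem_center_iff.mp hz c).symm, mul_one]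

end Commutator

section Generators

variable (T : M ≃+ M)

lemma e_mul_e (x y : M) : e T x * e T (T y + x - T x) = e T y * e T x := by
  have h := PresentedGroup.one_of_mem (rels := rels T) ⟨x, y, rfl⟩
  simp only [map_mul, map_inv, mul_inv_eq_one] at h
  change e T (T y + x - T x) = (e T x)⁻¹ * e T y * e T x at h
  rw [h]; group

lemma e_mul_e_zero (x : M) : e T x * e T 0 = e T 0 * e T (T x) := by
  simpa using (e_mul_e T 0 x).symm

def g (x : M) : Adj T := (e T 0)⁻¹ * e T x

lemma e_eq_mul_g (x : M) : e T x = e T 0 * g T x := by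
  rw [g, mul_inv_cancel_left]

lemma g_zero : g T 0 = 1 := inv_mul_cancel _

lemma g_mul_e_zero (x : M) : g T x * e T 0 = e T 0 * g T (T x) := by
  rw [g, g, mul_assoc, e_mul_e_zero, inv_mul_cancel_left, mul_inv_cancel_left]

lemma conj_e_zero_g (x : M) : MulAut.conj (e T 0) (g T x) = g T (T.symm x) := by
  rw [MulAut.conj_apply, mul_inv_eq_iff_eq_mul, g_mul_e_zero, AddEquiv.apply_symm_apply]

lemma g_mul_g (x y : M) : g T y * g T x = g T (T x) * g T (y + (x - T x)) := by
  have hy : e T y = (e T 0)⁻¹ * e T (T.symm y) * e T 0 := by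
    rw [mul_assoc, e_mul_e_zero, AddEquiv.apply_symm_apply, inv_mul_cancel_left]
  have hx : e T (T x) = (e T 0)⁻¹ * e T x * e T 0 := by
    rw [mul_assoc, e_mul_e_zero, inv_mul_cancel_left]
  have hxy : e T (y + (x - T x)) = (e T x)⁻¹ * e T (T.symm y) * e T x := by
    rw [mul_assoc, ← e_mul_e, AddEquiv.apply_symm_apply, inv_mul_cancel_left, add_sub_assoc]
  simp only [g, hy, hx, hxy]
  group

lemma Tz_succ (m : ℤ) (x : M) : Tz T (m + 1) x = T (Tz T m x) := by
  rw [add_comm, Tz_add, Tz_one]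

lemma Tz_neg_one (x : M) : Tz T (-1) x = T.symm x := by
  rw [Tz, neg_one_zsmul, AddAut.neg_def]

lemma Tz_map (m : ℤ) (x : M) : Tz T m (T x) = T (Tz T m x) := by
  rw [← Tz_one T x, ← Tz_add, ← Tz_succ]

lemma g_mul_zpow (m : ℤ) (x : M) : g T x * e T 0 ^ m = e T 0 ^ m * g T (Tz T m x) := by
  induction m using Int.induction_on with
  | zero => rw [zpow_zero, one_mul, mul_one, Tz_zero]
  | succ i ih =>
    rw [zpow_add_one, ← mul_assoc, ih, mul_assoc, g_mul_e_zero, ← mul_assoc, Tz_succ]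
  | pred i ih =>
    have hinv (y : M) : g T y * (e T 0)⁻¹ = (e T 0)⁻¹ * g T (T.symm y) := by
      rw [mul_inv_eq_iff_eq_mul, mul_assoc, g_mul_e_zero, AddEquiv.apply_symm_apply,
        inv_mul_cancel_left]
    rw [sub_eq_add_neg, zpow_add, zpow_neg_one, add_comm _ (-1), Tz_add, Tz_neg_one,
      ← mul_assoc, ih, mul_assoc, hinv, ← mul_assoc]

end Generators

section Cocycle

variable (T : M ≃+ M)

lemma γ_eq_g (x y : M) : γ T x y = g T (x + y) * (g T y)⁻¹ * (g T x)⁻¹ := by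
  simp only [γ, g]; group

lemma g_add (x y : M) : g T (x + y) = γ T x y * g T x * g T y := by
  rw [γ_eq_g]; group

lemma γ_zero_left (q : M) : γ T 0 q = 1 := by
  rw [γ_eq_g, zero_add, g_zero]; group

lemma g_mul_γ (z p q : M) : g T z * γ T p q = γ T (T p) (T q) * g T z := by
  have hsum : z + (p - T p) + (q - T q) = z + (p + q - T (p + q)) := by rw [map_add]; abel
  have hp := g_mul_g T p z
  have hq := g_mul_g T q (z + (p - T p))
  have hpq := g_mul_g T (p + q) z
  rw [hsum] at hq
  have hW : g T (z + (p + q - T (p + q))) =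
      (g T (T q))⁻¹ * (g T (T p))⁻¹ * (g T z * g T p * g T q) := by
    rw [hp, mul_assoc (g T (T p)), hq]; group
  calc g T z * γ T p q = g T z * g T (p + q) * (g T q)⁻¹ * (g T p)⁻¹ := by rw [γ_eq_g]; group
    _ = γ T (T p) (T q) * g T z := by rw [hpq, hW, γ_eq_g, ← map_add]; group

lemma γ_map (p q : M) : γ T (T p) (T q) = γ T p q := by
  simpa [g_zero] using (g_mul_γ T 0 p q).symm

lemma γ_mem_center (p q : M) : γ T p q ∈ Subgroup.center (Adj T) := by
  have h0 : Commute (e T 0) (γ T p q) := by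
    have h := congrArg (MulAut.conj (e T 0)) (γ_eq_g T p q)
    rw [map_mul, map_mul, map_inv, map_inv, conj_e_zero_g, conj_e_zero_g, conj_e_zero_g,
      map_add, ← γ_eq_g, ← γ_map T (T.symm p), AddEquiv.apply_symm_apply,
      AddEquiv.apply_symm_apply, MulAut.conj_apply, mul_inv_eq_iff_eq_mul] at h
    exact h
  have hg (z : M) : Commute (g T z) (γ T p q) := by
    rw [Commute, SemiconjBy, g_mul_γ, γ_map]
  rw [Subgroup.center_eq_iInf (PresentedGroup.closure_range_of (rels T))]
  simp only [Subgroup.mem_iInf, Set.mem_range, forall_exists_index, forall_apply_eq_imp_iff,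
    Subgroup.mem_centralizer_singleton_iff]
  intro z
  exact ((e_eq_mul_g T z ▸ h0.mul_left (hg z)).eq).symm

lemma γ_sub_map_left (x y : M) : γ T (x - T x) y = ⁅g T y, g T x⁆ := by
  have hx : g T x = g T (T x) * g T (x - T x) := by simpa [g_zero] using g_mul_g T x 0
  have hc := Subgroup.mem_center_iff.mp (γ_mem_center T (x - T x) y) (g T (T x))
  have h : g T y * g T x = γ T (x - T x) y * (g T x * g T y) := by
    rw [g_mul_g, add_comm, g_add, hx]
    simp only [← mul_assoc, hc]
  rw [commutatorElement_def, h]; group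

lemma commutator_g_mem_center (x y : M) : ⁅g T x, g T y⁆ ∈ Subgroup.center (Adj T) :=
  γ_sub_map_left T y x ▸ γ_mem_center T _ _

lemma commutator_g_add_left (x x' y : M) :
    ⁅g T (x + x'), g T y⁆ = ⁅g T x, g T y⁆ * ⁅g T x', g T y⁆ := by
  rw [g_add, commutatorElement_mul_left_of_mem_center (commutator_g_mem_center T x' y),
    commutatorElement_mem_center_mul_left (γ_mem_center T x x') (commutator_g_mem_center T x y),
    Subgroup.mem_center_iff.mp (commutator_g_mem_center T x y)]

lemma commutator_g_add_right (x y y' : M) :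
    ⁅g T x, g T (y + y')⁆ = ⁅g T x, g T y⁆ * ⁅g T x, g T y'⁆ := by
  rw [← commutatorElement_inv, commutator_g_add_left, mul_inv_rev, commutatorElement_inv,
    commutatorElement_inv, Subgroup.mem_center_iff.mp (commutator_g_mem_center T x y)]

lemma γ_eq_γ_map (p q : M) : γ T p q = γ T (T q) (p + (q - T q)) := by
  have h := g_add T (T q) (p + (q - T q))
  rw [mul_assoc, ← g_mul_g, show T q + (p + (q - T q)) = p + q by abel, g_add, mul_assoc] at h
  exact mul_right_cancel h

variable {T}

lemma γ_add_right (hT : Function.Surjective fun x : M => x - T x) (p q q' : M) :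
    γ T p (q + q') = γ T p q * γ T p q' := by
  obtain ⟨x, rfl⟩ := hT p
  simp only [γ_sub_map_left, commutator_g_add_left]

lemma γ_swap (hT : Function.Surjective fun x : M => x - T x) (p q : M) :
    γ T (T q) p = γ T p q := by
  have h := γ_eq_γ_map T 0 q
  rw [zero_add, γ_zero_left] at h
  rw [γ_eq_γ_map T p q, γ_add_right hT, ← h, mul_one]

end Cocycle

section Theta

noncomputable def commutatorPairing (T : M ≃+ M) :
    M →+ M →+ Additive (Subgroup.center (Adj T)) :=
  AddMonoidHom.mk'
    (fun x => AddMonoidHom.mk'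
      (fun y => Additive.ofMul ⟨⁅g T x, g T y⁆, commutator_g_mem_center T x y⟩)
      fun y y' => by
        rw [← ofMul_mul]
        exact congrArg _ (Subtype.ext (commutator_g_add_right T x y y')))
    fun x x' => by
      ext y
      rw [AddMonoidHom.add_apply, AddMonoidHom.mk'_apply, AddMonoidHom.mk'_apply,
        AddMonoidHom.mk'_apply, ← ofMul_mul]
      exact congrArg _ (Subtype.ext (commutator_g_add_left T x x' y))

variable {T : M ≃+ M} (hT : Function.Bijective fun x : M => x - T x)

noncomputable def oneSub : M ≃+ M :=
  AddEquiv.ofBijective (AddMonoidHom.id M - T.toAddMonoidHom) hT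

lemma oneSub_apply (x : M) : oneSub hT x = x - T x := rfl

lemma sub_map_oneSub_symm (p : M) : (oneSub hT).symm p - T ((oneSub hT).symm p) = p :=
  (oneSub hT).apply_symm_apply p

lemma oneSub_symm_map (x : M) : (oneSub hT).symm (T x) = T ((oneSub hT).symm x) := by
  rw [AddEquiv.symm_apply_eq, oneSub_apply, ← map_sub, sub_map_oneSub_symm]

lemma commutator_g_oneSub_symm (p q : M) :
    ⁅g T ((oneSub hT).symm p), g T q⁆ = (γ T p q)⁻¹ := by
  rw [← commutatorElement_inv, ← γ_sub_map_left, sub_map_oneSub_symm]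

/-- `[u ⊗ v] ↦ ⁅g (h (h u)), g (h v)⁆ = γ(h u, h v)⁻¹` with `h = (1 - T)⁻¹`; this is compatible
with `τ` by `γ_swap`. -/
noncomputable def θLin : S T →ₗ[ℤ] Additive (Subgroup.center (Adj T)) := by
  let h := (oneSub hT).symm.toAddMonoidHom
  refine Submodule.liftQ _
    (TensorProduct.liftAddHom (((commutatorPairing T).comp (h.comp h)).compl₂ h)
      fun r m n => by rw [map_zsmul, map_zsmul, AddMonoidHom.smul_apply]).toIntLinearMap ?_
  rintro _ ⟨w, rfl⟩
  rw [LinearMap.mem_ker, LinearMap.sub_apply, LinearMap.id_apply, map_sub, sub_eq_zero]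
  induction w using TensorProduct.induction_on with
  | zero => simp
  | tmul u v =>
    refine congrArg Additive.ofMul (Subtype.ext ?_)
    change ⁅g T (h (h u)), g T (h v)⁆ = ⁅g T (h (h (T v))), g T (h u)⁆
    simp only [h, AddEquiv.toAddMonoidHom_eq_coe, AddMonoidHom.coe_coe]
    rw [commutator_g_oneSub_symm, commutator_g_oneSub_symm, oneSub_symm_map, γ_swap hT.2]
  | add w w' hw hw' => rw [map_add, map_add (τmap T), map_add, hw, hw']

noncomputable def θ : Multiplicative (S T) →* Adj T :=
  (Subgroup.center (Adj T)).subtype.comp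
    (AddMonoidHom.toMultiplicativeLeft (θLin hT).toAddMonoidHom)

lemma θ_mem_center (s : Multiplicative (S T)) : θ hT s ∈ Subgroup.center (Adj T) :=
  (AddMonoidHom.toMultiplicativeLeft (θLin hT).toAddMonoidHom s).2

lemma θ_cls (u v : M) : θ hT (.ofAdd (cls T u v)) =
    ⁅g T ((oneSub hT).symm ((oneSub hT).symm u)), g T ((oneSub hT).symm v)⁆ := rfl

lemma θ_cls_sub (p q : M) : θ hT (.ofAdd (cls T (p - T p) (q - T q))) = (γ T p q)⁻¹ := by
  rw [θ_cls, ← oneSub_apply hT, ← oneSub_apply hT, AddEquiv.symm_apply_apply,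
    AddEquiv.symm_apply_apply, commutator_g_oneSub_symm]

end Theta

section FGroup

variable (T : M ≃+ M)

lemma F_mul (a b : F T) : a * b =
    (a.1 + b.1, Tz T b.1 a.2.1 + b.2.1, a.2.2 + b.2.2 + cls T (Tz T b.1 a.2.1) b.2.1) := rfl

lemma F_inv (a : F T) : a⁻¹ = (-a.1, -(Tz T (-a.1) a.2.1), -a.2.2 + cls T a.2.1 a.2.1) := rfl

lemma cls_T_left (x y : M) : cls T (T x) y = cls T y x :=
  mk_τmap T (y ⊗ₜ[ℤ] x)

lemma cls_neg_right (x y : M) : cls T x (-y) = -cls T x y := by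
  simp only [cls, ← Submodule.Quotient.mk_neg, TensorProduct.tmul_neg]

lemma cls_sub_right (x y y' : M) : cls T x (y - y') = cls T x y - cls T x y' := by
  simp only [cls, ← Submodule.Quotient.mk_sub, TensorProduct.tmul_sub]

lemma F_generator_rel (x y : M) :
    ((1 : ℤ), x - T x, (0 : S T)) * (1, (T y + x - T x) - T (T y + x - T x), 0) =
      ((1 : ℤ), y - T y, (0 : S T)) * (1, x - T x, 0) := by
  have hw : (T y + x - T x) - T (T y + x - T x) = T (y - T y) + (x - T x) - T (x - T x) := by
    simp only [map_sub, map_add]; abel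
  rw [hw, F_mul, F_mul]
  simp only [Tz_one, zero_add, Prod.mk.injEq, true_and]
  constructor
  · abel
  · rw [cls_sub_right, cls_add_right, cls_T, cls_T, cls_T_left, cls_T_left]; abel

lemma F_commutator (p q : M) :
    ⁅((0 : ℤ), p, (0 : S T)), ((0 : ℤ), q, (0 : S T))⁆ = (0, 0, cls T (p - T p) q) := by
  simp only [commutatorElement_def, F_mul, F_inv, Tz_zero, neg_zero, add_zero, zero_add,
    Prod.mk.injEq, true_and]
  constructor
  · abel
  · rw [sub_eq_add_neg p]
    simp only [cls_add_left, cls_neg_left, cls_neg_right, cls_T_left]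
    abel

def F.deg : F T →* Multiplicative ℤ where
  toFun a := .ofAdd a.1
  map_one' := rfl
  map_mul' _ _ := rfl

def F.act : F T →* (Equiv.Perm M)ᵐᵒᵖ where
  toFun a := .op ((Tz T a.1).toEquiv.trans (Equiv.addRight a.2.1))
  map_one' := by
    rw [MulOpposite.op_eq_one_iff]
    ext p
    exact add_zero p
  map_mul' a b := by
    rw [← MulOpposite.op_mul, MulOpposite.op_inj]
    ext p
    simp only [F_mul, Equiv.trans_apply, AddEquiv.toEquiv_eq_coe, AddEquiv.coe_toEquiv,
      Equiv.coe_addRight, Equiv.Perm.mul_apply, map_add, add_comm a.1, Tz_add]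
    abel

end FGroup

section Comparison

variable (T : M ≃+ M)

noncomputable def Φ : Adj T →* F T :=
  PresentedGroup.toGroup (f := fun x => ((1 : ℤ), x - T x, (0 : S T))) (by
    rintro _ ⟨x, y, rfl⟩
    rw [map_mul, map_inv, mul_inv_eq_one, map_mul, map_mul, map_inv, mul_assoc,
      eq_inv_mul_iff_mul_eq]
    simp only [FreeGroup.lift_apply_of]
    exact F_generator_rel T x y)

lemma Φ_e (x : M) : Φ T (e T x) = (1, x - T x, 0) := PresentedGroup.toGroup.of _

lemma Φ_g (x : M) : Φ T (g T x) = (0, x - T x, 0) := by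
  simp [g, Φ_e, F_mul, F_inv, cls_zero_left]

lemma ε_eq_deg_comp_Φ : ε T = (F.deg T).comp (Φ T) :=
  PresentedGroup.ext fun x => by
    change ε T (e T x) = F.deg T (Φ T (e T x))
    rw [Φ_e, ε, e, PresentedGroup.toGroup.of]
    rfl

lemma ρ_eq_act_comp_Φ : ρ T = (F.act T).comp (Φ T) :=
  PresentedGroup.ext fun x => by
    change ρ T (e T x) = F.act T (Φ T (e T x))
    rw [Φ_e, ρ, e, PresentedGroup.toGroup.of]
    refine congrArg MulOpposite.op (Equiv.ext fun p => ?_)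
    simp [σ_apply, Tz_one]

lemma mem_pi1_iff (w : Adj T) : w ∈ pi1 T ↔ (Φ T w).1 = 0 ∧ (Φ T w).2.1 = 0 := by
  change w ∈ (ε T).ker ∧ (ρ T w).unop 0 = 0 ↔ _
  rw [MonoidHom.mem_ker, ε_eq_deg_comp_Φ, ρ_eq_act_comp_Φ]
  simp [F.deg, F.act]

variable {T} (hT : Function.Bijective fun x : M => x - T x)

lemma Φ_θ (s : Multiplicative (S T)) : Φ T (θ hT s) = (0, 0, s.toAdd) := by
  obtain ⟨s, rfl⟩ := Multiplicative.ofAdd.surjective s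
  rw [toAdd_ofAdd]
  induction s using Submodule.Quotient.induction_on with | _ w => ?_
  induction w using TensorProduct.induction_on with
  | zero => rw [Submodule.Quotient.mk_zero, ofAdd_zero, map_one, map_one]; rfl
  | tmul u v =>
    rw [← cls, θ_cls, map_commutatorElement, Φ_g, Φ_g, F_commutator, sub_map_oneSub_symm,
      sub_map_oneSub_symm, sub_map_oneSub_symm]
  | add w w' hw hw' =>
    rw [Submodule.Quotient.mk_add, ofAdd_add, map_mul, map_mul, hw, hw', F_mul]
    simp [Tz_zero, cls_zero_left]

/-- The normal form `a^k g((1 - T)⁻¹ x) θ(α)` of the element of `Adj` with `Φ`-image `(k, x, α)`. -/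
noncomputable def ψ : F T →* Adj T where
  toFun a := e T 0 ^ a.1 * g T ((oneSub hT).symm a.2.1) * θ hT (.ofAdd a.2.2)
  map_one' := by
    change e T 0 ^ (0 : ℤ) * g T ((oneSub hT).symm 0) * θ hT (.ofAdd 0) = 1
    rw [zpow_zero, map_zero, g_zero, ofAdd_zero, map_one, one_mul, one_mul]
  map_mul' := by
    rintro ⟨k, x, α⟩ ⟨m, y, β⟩
    set h := (oneSub hT).symm
    change e T 0 ^ (k + m) * g T (h (Tz T m x + y)) * θ hT (.ofAdd (α + β + cls T (Tz T m x) y))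
      = e T 0 ^ k * g T (h x) * θ hT (.ofAdd α) * (e T 0 ^ m * g T (h y) * θ hT (.ofAdd β))
    have hX : Tz T m (h x) - T (Tz T m (h x)) = Tz T m x := by
      rw [← Tz_map, ← map_sub, sub_map_oneSub_symm]
    have hY : h y - T (h y) = y := sub_map_oneSub_symm hT y
    have hsum : h (Tz T m x + y) = Tz T m (h x) + h y := by
      rw [AddEquiv.symm_apply_eq, map_add, oneSub_apply, oneSub_apply, hX, hY]
    have hcls : θ hT (.ofAdd (cls T (Tz T m x) y)) = (γ T (Tz T m (h x)) (h y))⁻¹ := by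
      rw [← θ_cls_sub, hX, hY]
    have hα := Subgroup.mem_center_iff.mp (θ_mem_center hT (.ofAdd α))
    have hc := Subgroup.mem_center_iff.mp (θ_mem_center hT (.ofAdd (cls T (Tz T m x) y)))
    have hθ : θ hT (.ofAdd (α + β + cls T (Tz T m x) y)) =
        θ hT (.ofAdd (cls T (Tz T m x) y)) * (θ hT (.ofAdd α) * θ hT (.ofAdd β)) := by
      rw [ofAdd_add, ofAdd_add, map_mul, map_mul, hc]
    calc e T 0 ^ (k + m) * g T (h (Tz T m x + y)) * θ hT (.ofAdd (α + β + cls T (Tz T m x) y))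
        = e T 0 ^ k * e T 0 ^ m * (g T (Tz T m (h x) + h y) * θ hT (.ofAdd (cls T (Tz T m x) y)))
            * (θ hT (.ofAdd α) * θ hT (.ofAdd β)) := by
          rw [hsum, hθ, zpow_add]; group
      _ = e T 0 ^ k * (g T (h x) * e T 0 ^ m) * g T (h y) *
            (θ hT (.ofAdd α) * θ hT (.ofAdd β)) := by
          rw [hc, hcls, g_add, g_mul_zpow]; group
      _ = e T 0 ^ k * g T (h x) * θ hT (.ofAdd α) *
            (e T 0 ^ m * g T (h y) * θ hT (.ofAdd β)) := by
          rw [mul_assoc (e T 0 ^ k * g T (h x)), ← mul_assoc (θ hT (.ofAdd α)),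
            ← hα (e T 0 ^ m * g T (h y))]
          group

lemma ψ_comp_Φ : (ψ hT).comp (Φ T) = MonoidHom.id (Adj T) :=
  PresentedGroup.ext fun x => by
    change ψ hT (Φ T (e T x)) = e T x
    rw [Φ_e]
    change e T 0 ^ (1 : ℤ) * g T ((oneSub hT).symm (x - T x)) * θ hT (.ofAdd 0) = e T x
    rw [zpow_one, ← oneSub_apply hT, AddEquiv.symm_apply_apply, ofAdd_zero, map_one, mul_one,
      ← e_eq_mul_g]

end Comparison

lemma Φ_injective {T : M ≃+ M} (hT : Function.Bijective fun x : M => x - T x) :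
    Function.Injective (Φ T) :=
  Function.LeftInverse.injective (g := ψ hT) fun w => DFunLike.congr_fun (ψ_comp_Φ hT) w

/-- If `1 - T` is invertible, the fundamental group `π₁(A(M,T), 0)` of the Alexander quandle
based at `0 ∈ M` is isomorphic to the abelian group `S(M,T)`. -/
theorem statement16 (T : M ≃+ M) (hT : Function.Bijective fun x : M => x - T x) :
    Nonempty (pi1 T ≃* Multiplicative (S T)) := by
  have hθ (s : Multiplicative (S T)) : θ hT s ∈ pi1 T := by
    rw [mem_pi1_iff, Φ_θ]
    exact ⟨rfl, rfl⟩
  refine ⟨(MulEquiv.ofBijective ((θ hT).codRestrict (pi1 T) hθ)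
    ⟨fun s t hst => ?_, fun w => ?_⟩).symm⟩
  · have := congrArg (fun w => (Φ T w).2.2) (congrArg Subtype.val hst)
    simpa [Φ_θ] using this
  · obtain ⟨hk, hx⟩ := (mem_pi1_iff T w).mp w.2
    refine ⟨.ofAdd (Φ T w).2.2, Subtype.ext (Φ_injective hT ?_)⟩
    rw [MonoidHom.codRestrict_apply, Φ_θ]
    ext <;> simp [hk, hx]

end Clauwens
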